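/- Let a₁ > 0 and define the sequence a_{k+1} = a_k/2 + (a_k/2)·√(1 + 4/a_k). Then the sequence is strictly increasing, satisfies a_k ≤ a₁ + (k − 1) for all k ≥ 1, tends to infinity, and a_k / k → 1 as k → ∞. -/

import Mathlib

open Filter

/-- Let `a₁ > 0` and define `a_{k+1} = a_k/2 + (a_k/2)√(1 + 4/a_k)` for `k ≥ 1`.  Then the
sequence is strictly increasing, satisfies `a_k ≤ a₁ + (k − 1)` for all `k ≥ 1`, tends to
infinity, and `a_k / k → 1` as `k → ∞`. -/
theorem stmt10 (a₁ : ℝ) (ha₁ : 0 < a₁) (a : ℕ → ℝ) (h1 : a 1 = a₁)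
    (hrec : ∀ k, 1 ≤ k → a (k + 1) = a k / 2 + (a k / 2) * Real.sqrt (1 + 4 / a k)) :
    (∀ k, 1 ≤ k → a k < a (k + 1)) ∧
    (∀ k, 1 ≤ k → a k ≤ a₁ + ((k : ℝ) - 1)) ∧
    Tendsto (fun k : ℕ => a k) atTop atTop ∧
    Tendsto (fun k : ℕ => a k / k) atTop (nhds 1) := by
  -- positivity
  have hpos : ∀ k, 1 ≤ k → 0 < a k := by
    intro k hk
    induction k, hk using Nat.le_induction with
    | base => rw [h1]; exact ha₁
    | succ n hn ih =>
      rw [hrec n hn]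
      have hs : 0 ≤ Real.sqrt (1 + 4 / a n) := Real.sqrt_nonneg _
      nlinarith
  -- key quadratic identity
  have hid : ∀ k, 1 ≤ k → a (k + 1) ^ 2 = a k * a (k + 1) + a k := by
    intro k hk
    have hx := hpos k hk
    have h4 : (0:ℝ) ≤ 1 + 4 / a k := by positivity
    have hs : Real.sqrt (1 + 4 / a k) ^ 2 = 1 + 4 / a k := Real.sq_sqrt h4
    have hs' : Real.sqrt (1 + 4 / a k) ^ 2 * a k = a k + 4 := by
      rw [hs]; field_simp
    rw [hrec k hk]
    nlinarith [hs']
  -- strict monotonicity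
  have hmono : ∀ k, 1 ≤ k → a k < a (k + 1) := by
    intro k hk
    have h1' := hid k hk
    have h2 := hpos k hk
    have h3 := hpos (k + 1) (by omega)
    nlinarith
  -- increments: a(k+1) - a k = a k / a(k+1), and bounds
  have hdlt : ∀ k, 1 ≤ k → a (k + 1) - a k = a k / a (k + 1) := by
    intro k hk
    have h1' := hid k hk
    have h3 := (hpos (k + 1) (by omega)).ne'
    field_simp
    nlinarith
  have hdlt1 : ∀ k, 1 ≤ k → a (k + 1) - a k < 1 := by
    intro k hk
    rw [hdlt k hk]
    have h3 := hpos (k + 1) (by omega)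
    rw [div_lt_one h3]
    exact hmono k hk
  -- a₁ ≤ a k
  have hlb : ∀ k, 1 ≤ k → a₁ ≤ a k := by
    intro k hk
    induction k, hk using Nat.le_induction with
    | base => rw [h1]
    | succ n hn ih => linarith [hmono n hn]
  -- upper bound
  have hub : ∀ k, 1 ≤ k → a k ≤ a₁ + ((k : ℝ) - 1) := by
    intro k hk
    induction k, hk using Nat.le_induction with
    | base => simp [h1]
    | succ n hn ih =>
      have := hdlt1 n hn
      push_cast
      push_cast at ih
      linarith
  -- lower bound with slope c
  set c : ℝ := a₁ / (a₁ + 1) with hc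
  have hcpos : 0 < c := by positivity
  have hdc : ∀ k, 1 ≤ k → c ≤ a (k + 1) - a k := by
    intro k hk
    rw [hdlt k hk]
    have h2 := hpos k hk
    have h3 := hpos (k + 1) (by omega)
    have h4 : a (k + 1) ≤ a k + 1 := by linarith [hdlt1 k hk]
    have h5 := hlb k hk
    rw [hc, div_le_div_iff₀ (by positivity) h3]
    nlinarith
  have hlbc : ∀ k : ℕ, 1 ≤ k → a₁ + ((k : ℝ) - 1) * c ≤ a k := by
    intro k hk
    induction k, hk using Nat.le_induction with
    | base => simp [h1]
    | succ n hn ih =>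
      have := hdc n hn
      push_cast
      push_cast at ih
      linarith
  -- tendsto atTop
  have htop : Tendsto (fun k : ℕ => a k) atTop atTop := by
    apply tendsto_atTop_mono' atTop (by
      filter_upwards [eventually_ge_atTop 1] with k hk
      exact hlbc k hk)
    apply tendsto_atTop_add_const_left
    exact Tendsto.atTop_mul_const hcpos
      (tendsto_atTop_add_const_right _ _ tendsto_natCast_atTop_atTop)
  -- increments tend to 1
  set u : ℕ → ℝ := fun n => a (n + 2) - a (n + 1) with hu
  have hut : Tendsto u atTop (nhds 1) := by
    have htop2 : Tendsto (fun n : ℕ => a (n + 2)) atTop atTop :=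
      htop.comp (tendsto_add_atTop_nat 2)
    have hlower : Tendsto (fun n : ℕ => 1 - (a (n + 2))⁻¹) atTop (nhds 1) := by
      have : Tendsto (fun n : ℕ => (a (n + 2))⁻¹) atTop (nhds 0) :=
        htop2.inv_tendsto_atTop
      simpa using (tendsto_const_nhds (x := (1:ℝ))).sub this
    apply tendsto_of_tendsto_of_tendsto_of_le_of_le' hlower tendsto_const_nhds
    · filter_upwards with n
      have hk : 1 ≤ n + 1 := by omega
      have h3 := hpos (n + 2) (by omega)
      have hd := hdlt (n + 1) hk
      have hd1 := hdlt1 (n + 1) hk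
      have : a (n + 1) / a (n + 2) = 1 - (a (n + 2) - a (n + 1)) / a (n + 2) := by
        field_simp
        ring
      simp only [hu]
      rw [show n + 1 + 1 = n + 2 from rfl] at hd hd1
      rw [hd, this]
      have : (a (n + 2) - a (n + 1)) / a (n + 2) ≤ (a (n + 2))⁻¹ := by
        rw [div_le_iff₀ h3] at *
        have := hd1
        nlinarith [inv_mul_cancel₀ h3.ne']
      linarith
    · filter_upwards with n
      have hd1 := hdlt1 (n + 1) (by omega)
      simpa [hu] using hd1.le
  -- Cesàro
  have hces := hut.cesaro
  have hsum : ∀ n : ℕ, ∑ i ∈ Finset.range n, u i = a (n + 1) - a 1 := by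
    intro n
    simpa [hu] using Finset.sum_range_sub (fun i => a (i + 1)) n
  have hg : Tendsto (fun n : ℕ => (a (n + 1) - a₁) / n) atTop (nhds 1) := by
    refine hces.congr (fun n => ?_)
    rw [hsum n, h1, inv_mul_eq_div]
  -- shift: (a(n+1) - a₁)/(n+1) → 1
  have hratio : Tendsto (fun n : ℕ => (n : ℝ) / ((n : ℝ) + 1)) atTop (nhds 1) := by
    exact tendsto_natCast_div_add_atTop (1 : ℝ)
  have hg2 : Tendsto (fun n : ℕ => (a (n + 1) - a₁) / ((n : ℝ) + 1)) atTop (nhds 1) := by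
    have := hg.mul hratio
    rw [mul_one] at this
    apply this.congr'
    filter_upwards [eventually_ge_atTop 1] with n hn
    have hn' : (0:ℝ) < n := by exact_mod_cast hn
    field_simp
  have hg3 : Tendsto (fun n : ℕ => (a n - a₁) / (n : ℝ)) atTop (nhds 1) := by
    rw [← tendsto_add_atTop_iff_nat 1]
    exact hg2.congr (fun n => by norm_cast)
  -- conclude
  have hfinal : Tendsto (fun n : ℕ => a n / (n : ℝ)) atTop (nhds 1) := by
    have hz : Tendsto (fun n : ℕ => a₁ / (n : ℝ)) atTop (nhds 0) :=
      tendsto_const_nhds.div_atTop tendsto_natCast_atTop_atTop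
    have := hg3.add hz
    rw [add_zero] at this
    apply this.congr'
    filter_upwards [eventually_ge_atTop 1] with n hn
    have hn' : ((n:ℝ)) ≠ 0 := by positivity
    field_simp
    ring
  exact ⟨hmono, hub, htop, hfinal⟩
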